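/- Let G be a finite connected graph with |V| ≥ 3 whose derivation matrices are constrained as follows: if d is a derivation of A(G) with matrix (d_{ij}) and d_{ij} = 0 whenever i and j lie in a common twin class of size ≥ 3, then d = 0. -/

import Mathlib

/-!
The first derivation equation, read at a vertex `k` adjacent to `j` but not to `i`, gives
`d i j = 0`; so only entries inside twin classes survive, and for twins a common neighbour gives
`d i j = -d j i`. The second equation then says that along every edge `ij` the column sum of `d`
over the twin class of `j` is `2 d i i`. For a twin class `{i, j}` of size two, comparing these
sums for a common neighbour `m` of `i` and `j` yields `d i i = d j j` and `d i j = d j i`, hence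
`d i j = 0`. Once all off-diagonal entries vanish, the column sums are diagonal entries, so along
an edge `vw` we get `d w w = 2 d v v` and `d v v = 2 d w w`, whence `3 d v v = 0`.
-/

open Finset

namespace SimpleGraph

variable {V K : Type*} [Fintype V] [Field K]

/-- `d` is the matrix, in the natural basis `e_i`, of a derivation of the evolution algebra of `G`:
the two fields are the coefficients of `d (e_i e_j) = d e_i · e_j + e_i · d e_j` for `i ≠ j` and
for `i = j`. -/
structure IsEvolutionDerivation (G : SimpleGraph V) [DecidableRel G.Adj] (d : V → V → K) :
    Prop where
  adjMatrix_mul_add_adjMatrix_mul : ∀ i j k, i ≠ j →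
    G.adjMatrix K j k * d i j + G.adjMatrix K i k * d j i = 0
  sum_adjMatrix_mul : ∀ i j, ∑ k, G.adjMatrix K i k * d k j = 2 * G.adjMatrix K i j * d i i

def twinClass [DecidableEq V] (G : SimpleGraph V) [DecidableRel G.Adj] (i : V) : Finset V :=
  univ.filter fun k => G.neighborFinset k = G.neighborFinset i

@[simp]
theorem mem_twinClass [DecidableEq V] {G : SimpleGraph V} [DecidableRel G.Adj] {i j : V} :
    j ∈ G.twinClass i ↔ G.neighborFinset j = G.neighborFinset i := by
  simp [twinClass]

namespace IsEvolutionDerivation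

variable {G : SimpleGraph V} [DecidableRel G.Adj] {d : V → V → K} {i j k : V}

theorem eq_zero_of_adj_of_not_adj (hd : G.IsEvolutionDerivation d) (hij : i ≠ j)
    (hjk : G.Adj j k) (hik : ¬G.Adj i k) : d i j = 0 := by
  simpa [adjMatrix_apply, hjk, hik] using hd.adjMatrix_mul_add_adjMatrix_mul i j k hij

theorem add_swap_eq_zero (hd : G.IsEvolutionDerivation d) (hij : i ≠ j)
    (hik : G.Adj i k) (hjk : G.Adj j k) : d i j + d j i = 0 := by
  simpa [adjMatrix_apply, hjk, hik] using hd.adjMatrix_mul_add_adjMatrix_mul i j k hij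

theorem eq_zero_of_neighborFinset_ne (hd : G.IsEvolutionDerivation d) (hij : i ≠ j)
    (hj : ∃ w, G.Adj j w) (hN : G.neighborFinset i ≠ G.neighborFinset j) : d i j = 0 := by
  by_cases hsub : G.neighborFinset j ⊆ G.neighborFinset i
  · obtain ⟨k, hik, hjk⟩ := exists_of_ssubset (hsub.ssubset_of_ne (Ne.symm hN))
    have hji : d j i = 0 :=
      hd.eq_zero_of_adj_of_not_adj hij.symm (by simpa using hik) (by simpa using hjk)
    obtain ⟨w, hjw⟩ := hj
    have hiw : G.Adj i w := by simpa using hsub (by simpa using hjw)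
    simpa [hji] using hd.add_swap_eq_zero hij hiw hjw
  · obtain ⟨k, hjk, hik⟩ := not_subset.mp hsub
    exact hd.eq_zero_of_adj_of_not_adj hij (by simpa using hjk) (by simpa using hik)

theorem sum_twinClass_eq [DecidableEq V] (hd : G.IsEvolutionDerivation d) (hij : G.Adj i j) :
    ∑ k ∈ G.twinClass j, d k j = 2 * d i i := by
  have hin : ∀ k ∈ G.twinClass j, G.adjMatrix K i k * d k j = d k j := by
    intro k hk
    have hki : G.Adj k i := by
      rw [← mem_neighborFinset, mem_twinClass.mp hk, mem_neighborFinset]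
      exact hij.symm
    simp [adjMatrix_apply, hki.symm]
  have hout : ∀ k ∈ univ, k ∉ G.twinClass j → G.adjMatrix K i k * d k j = 0 := by
    intro k _ hk
    rw [mem_twinClass] at hk
    rw [hd.eq_zero_of_neighborFinset_ne (by rintro rfl; exact hk rfl) ⟨i, hij.symm⟩ hk, mul_zero]
  calc ∑ k ∈ G.twinClass j, d k j
      = ∑ k ∈ G.twinClass j, G.adjMatrix K i k * d k j := (sum_congr rfl hin).symm
    _ = ∑ k, G.adjMatrix K i k * d k j := sum_subset (subset_univ _) hout
    _ = 2 * d i i := by simpa [adjMatrix_apply, hij] using hd.sum_adjMatrix_mul i j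

theorem eq_zero_of_card_twinClass_le_two [DecidableEq V] [NeZero (2 : K)] (hd : G.IsEvolutionDerivation d)
    (hij : i ≠ j) (htwin : G.neighborFinset i = G.neighborFinset j)
    (hcard : #(G.twinClass i) ≤ 2) (hi : ∃ m, G.Adj i m) : d i j = 0 := by
  obtain ⟨m, him⟩ := hi
  have hjm : G.Adj j m := by rw [← mem_neighborFinset, ← htwin, mem_neighborFinset]; exact him
  have hpair : G.twinClass i = {i, j} :=
    (eq_of_subset_of_card_le (by simp [insert_subset_iff, htwin]) (by rwa [card_pair hij])).symm
  have hclass : G.twinClass j = G.twinClass i := by simp [twinClass, htwin]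
  have hdiag : d i i = d j j :=
    mul_left_cancel₀ two_ne_zero ((hd.sum_twinClass_eq him).symm.trans (hd.sum_twinClass_eq hjm))
  have hsi := hd.sum_twinClass_eq him.symm
  have hsj := hd.sum_twinClass_eq hjm.symm
  rw [hclass] at hsj
  rw [hpair, sum_pair hij] at hsi hsj
  have h2 : 2 * d i j = 0 := by
    linear_combination hsj - hsi + hd.add_swap_eq_zero hij him hjm + hdiag
  exact (mul_eq_zero.mp h2).resolve_left two_ne_zero

theorem eq_zero_of_twin_eq_zero [NeZero (3 : K)] (hd : G.IsEvolutionDerivation d)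
    (hnbr : ∀ v, ∃ w, G.Adj v w)
    (htwin : ∀ i j, i ≠ j → G.neighborFinset i = G.neighborFinset j → d i j = 0)
    (i j : V) : d i j = 0 := by
  classical
  have hoff : ∀ i j, i ≠ j → d i j = 0 := fun i j hij =>
    if hN : G.neighborFinset i = G.neighborFinset j then htwin i j hij hN
    else hd.eq_zero_of_neighborFinset_ne hij (hnbr j) hN
  have hcol : ∀ v, ∑ k ∈ G.twinClass v, d k v = d v v := fun v =>
    sum_eq_single_of_mem v (by simp) fun k _ hkv => hoff k v hkv
  have hdiag : ∀ v, d v v = 0 := by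
    intro v
    obtain ⟨w, hvw⟩ := hnbr v
    have hw := hd.sum_twinClass_eq hvw
    have hv := hd.sum_twinClass_eq hvw.symm
    rw [hcol] at hw hv
    have h3 : 3 * d v v = 0 := by linear_combination -2 * hw - hv
    exact (mul_eq_zero.mp h3).resolve_left three_ne_zero
  rcases eq_or_ne i j with rfl | hij
  · exact hdiag i
  · exact hoff i j hij

end IsEvolutionDerivation

end SimpleGraph

theorem der_zero_of_twin_entries_zero {V : Type*} [Fintype V] [DecidableEq V]
    (G : SimpleGraph V) [DecidableRel G.Adj]
{K : Type*} [Field K] [CharZero K]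
    (hconn : G.Connected) (hcard : 3 ≤ Fintype.card V)
    (d : V → V → K)
    (h1 : ∀ i j k : V, i ≠ j →
      (if G.Adj j k then (1:K) else 0) * d i j +
      (if G.Adj i k then (1:K) else 0) * d j i = 0)
    (h2 : ∀ i j : V, ∑ k, (if G.Adj i k then (1:K) else 0) * d k j =
      2 * (if G.Adj i j then (1:K) else 0) * d i i)
    (hz : ∀ i j : V, G.neighborFinset i = G.neighborFinset j →
      3 ≤ (Finset.univ.filter fun k =>
        G.neighborFinset k = G.neighborFinset i).card → d i j = 0) :
    ∀ i j : V, d i j = 0 := by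
  have hd : G.IsEvolutionDerivation d := ⟨h1, h2⟩
  have : Nontrivial V := Fintype.one_lt_card_iff_nontrivial.mp (by omega)
  have hnbr := hconn.preconnected.exists_adj_of_nontrivial
  refine hd.eq_zero_of_twin_eq_zero hnbr fun i j hij htwin => ?_
  by_cases h3 : 3 ≤ #(G.twinClass i)
  · exact hz i j htwin h3
  · exact hd.eq_zero_of_card_twinClass_le_two hij htwin (by omega) (hnbr i)
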